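/- Under the general setup, assume the family {U_n}_{n∈ℕ} is weakly relatively compact (tight), the coherency condition holds, and Z_n converges in distribution to some ℝ^m-valued random vector Z as n → ∞. Then the family {V_n}_{n∈ℕ} of ℝ^m-valued random vectors is weakly relatively compact (tight), and hence the family {W_n = (U_n, V_n^⊤)^⊤}_{n∈ℕ} of ℝ^{m+1}-valued random vectors is weakly relatively compact (tight). -/

import Mathlib

open MeasureTheory ProbabilityTheory Filter Topology
open scoped RealInnerProductSpace

/-- The characteristic function of an `ℝ^m`-valued random vector `X`
on a probability space `(Ω, P)`, evaluated at `t`. -/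
noncomputable def charFn {Ω : Type*} [MeasurableSpace Ω] (P : Measure Ω) {m : ℕ}
    (X : Ω → EuclideanSpace ℝ (Fin m)) (t : EuclideanSpace ℝ (Fin m)) : ℂ :=
  ∫ ω, Complex.exp ((⟪t, X ω⟫ : ℝ) * Complex.I) ∂P

/-!
Since `a_{n,k} = S_{n,k} - b_{n,k} Y_{n,k}`, we have `V_n = Z_n - U_n • Y_{n,N_n}`, so it suffices
that `Z_n`, `U_n` and `Y_{n,N_n}` are tight: tightness passes to pairs and to continuous images.
`Z_n` converges in law, hence is tight by Lévy's continuity theorem. As `N_n` is independent of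
each `Y_{n,k}`, the characteristic function of `Y_{n,N_n}` is `t ↦ E h_{n,N_n}(t)`, which differs
from `h(t)` by at most the coherency integral; so it converges pointwise to the continuous `h` and
Lévy's theorem again gives tightness.
-/

open Set BoundedContinuousFunction

theorem charFn_eq_charFun_map {Ω : Type*} [MeasurableSpace Ω] {P : Measure Ω} {m : ℕ}
    {X : Ω → EuclideanSpace ℝ (Fin m)} (hX : AEMeasurable X P) :
    charFn P X = charFun (P.map X) := by
  ext t
  rw [charFun_apply, integral_map hX (by fun_prop)]
  simp only [charFn, real_inner_comm]

theorem inv_smul_sub_eq_inv_smul_sub_sub_smul_inv_smul {E : Type*} [AddCommGroup E] [Module ℝ E]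
    {b : ℝ} (hb : b ≠ 0) (d : ℝ) (s a c : E) :
    d⁻¹ • (a - c) = d⁻¹ • (s - c) - (d⁻¹ * b) • (b⁻¹ • (s - a)) := by
  rw [smul_smul, mul_assoc, mul_inv_cancel₀ hb, mul_one, ← smul_sub, sub_sub_sub_cancel_left]

section TightFamily

variable {Ω ι E F : Type*} [MeasurableSpace Ω] {P : Measure Ω}

def IsTightFamily [TopologicalSpace E] [MeasurableSpace E] (P : Measure Ω) (X : ι → Ω → E) :
    Prop :=
  IsTightMeasureSet (range fun i => P.map (X i))

theorem isTightFamily_iff_tendsto_iSup_measure_norm_gt [NormedAddCommGroup E] [ProperSpace E]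
    [MeasurableSpace E] [BorelSpace E] {X : ι → Ω → E} (hX : ∀ i, AEMeasurable (X i) P) :
    IsTightFamily P X ↔
      Tendsto (fun R : ℝ => ⨆ i, P {ω | R < ‖X i ω‖}) atTop (𝓝 0) := by
  simp_rw [IsTightFamily, isTightMeasureSet_iff_tendsto_measure_norm_gt, iSup_range,
    Measure.map_apply_of_aemeasurable (hX _) (measurableSet_lt measurable_const measurable_norm)]
  rfl

theorem IsTightFamily.prodMk [TopologicalSpace E] [MeasurableSpace E] [TopologicalSpace F]
    [MeasurableSpace F] {X : ι → Ω → E} {Y : ι → Ω → F} (hX : IsTightFamily P X)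
    (hY : IsTightFamily P Y) (hXm : ∀ i, AEMeasurable (X i) P)
    (hYm : ∀ i, AEMeasurable (Y i) P) :
    IsTightFamily P fun i ω => (X i ω, Y i ω) := by
  refine IsTightMeasureSet.prodMk ?_ ?_ <;> rw [← range_comp]
  · simpa only [IsTightFamily, Function.comp_def, Measure.fst_map_prodMk₀ (hYm _)] using hX
  · simpa only [IsTightFamily, Function.comp_def, Measure.snd_map_prodMk₀ (hXm _)] using hY

theorem IsTightFamily.comp [TopologicalSpace E] [MeasurableSpace E] [OpensMeasurableSpace E]
    [TopologicalSpace F] [MeasurableSpace F] [BorelSpace F] [T2Space F] {X : ι → Ω → E}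
    (hX : IsTightFamily P X) (hXm : ∀ i, AEMeasurable (X i) P) {g : E → F} (hg : Continuous g) :
    IsTightFamily P fun i ω => g (X i ω) := by
  have := IsTightMeasureSet.map hX hg
  rw [← range_comp] at this
  simpa only [IsTightFamily, Function.comp_def,
    AEMeasurable.map_map_of_aemeasurable hg.aemeasurable (hXm _)] using this

theorem IsTightFamily.sub_smul [NormedAddCommGroup E] [NormedSpace ℝ E] [MeasurableSpace E]
    [BorelSpace E] [SecondCountableTopology E] {Z X : ι → Ω → E} {U : ι → Ω → ℝ}
    (hZ : IsTightFamily P Z) (hU : IsTightFamily P U) (hX : IsTightFamily P X)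
    (hZm : ∀ i, AEMeasurable (Z i) P) (hUm : ∀ i, AEMeasurable (U i) P)
    (hXm : ∀ i, AEMeasurable (X i) P) :
    IsTightFamily P fun i ω => Z i ω - U i ω • X i ω :=
  (hZ.prodMk (hU.prodMk hX hUm hXm) hZm fun i => (hUm i).prodMk (hXm i)).comp
    (fun i => (hZm i).prodMk ((hUm i).prodMk (hXm i)))
    (g := fun p : E × ℝ × E => p.1 - p.2.1 • p.2.2) (by fun_prop)

end TightFamily

section CharFun

variable {Ω E : Type*} [MeasurableSpace Ω] {P : Measure Ω} [IsProbabilityMeasure P]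
  [NormedAddCommGroup E] [InnerProductSpace ℝ E] [FiniteDimensional ℝ E] [MeasurableSpace E]
  [BorelSpace E]

theorem isTightFamily_of_tendsto_charFun {X : ℕ → Ω → E} (hX : ∀ n, AEMeasurable (X n) P)
    {f : E → ℂ} (hf : ContinuousAt f 0)
    (h : ∀ t, Tendsto (fun n => charFun (P.map (X n)) t) atTop (𝓝 (f t))) :
    IsTightFamily P X :=
  have := fun n => Measure.isProbabilityMeasure_map (hX n)
  isTightMeasureSet_of_tendsto_charFun hf h

theorem tendsto_charFun_map_of_tendsto_integral {X : ℕ → Ω → E}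
    (hX : ∀ n, AEMeasurable (X n) P) {X₀ : Ω → E} (hX₀ : AEMeasurable X₀ P)
    (h : ∀ f : E →ᵇ ℝ,
      Tendsto (fun n => ∫ ω, f (X n ω) ∂P) atTop (𝓝 (∫ ω, f (X₀ ω) ∂P)))
    (t : E) : Tendsto (fun n => charFun (P.map (X n)) t) atTop (𝓝 (charFun (P.map X₀) t)) := by
  let μ n : ProbabilityMeasure E := ⟨P.map (X n), Measure.isProbabilityMeasure_map (hX n)⟩
  let μ₀ : ProbabilityMeasure E := ⟨P.map X₀, Measure.isProbabilityMeasure_map hX₀⟩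
  have hμ : Tendsto μ atTop (𝓝 μ₀) := by
    refine ProbabilityMeasure.tendsto_iff_forall_integral_tendsto.mpr fun f => ?_
    simpa only [μ, μ₀, ProbabilityMeasure.coe_mk,
      integral_map (hX _) f.continuous.aestronglyMeasurable,
      integral_map hX₀ f.continuous.aestronglyMeasurable] using h f
  exact ProbabilityMeasure.tendsto_iff_tendsto_charFun.mp hμ t

end CharFun

section RandomIndex

variable {Ω β E : Type*} [MeasurableSpace Ω] {P : Measure Ω} {N : Ω → ℕ}

theorem measurable_randomIndex [MeasurableSpace β] {X : ℕ → Ω → β} (hN : Measurable N)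
    (hX : ∀ k, Measurable (X k)) : Measurable fun ω => X (N ω) ω :=
  (measurable_from_prod_countable_left hX : Measurable fun p : Ω × ℕ => X p.2 p.1).comp
    (measurable_id.prodMk hN)

theorem integrable_comp_nat_of_norm_le [NormedAddCommGroup E] [IsFiniteMeasure P]
    (hN : Measurable N) {g : ℕ → E} {C : ℝ} (hg : ∀ k, ‖g k‖ ≤ C) :
    Integrable (fun ω => g (N ω)) P :=
  .of_bound (StronglyMeasurable.of_discrete.comp_measurable hN).aestronglyMeasurable C
    (ae_of_all _ fun ω => hg (N ω))

theorem integral_randomIndex_eq_tsum [NormedAddCommGroup E] [NormedSpace ℝ E] (hN : Measurable N)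
    {F : ℕ → Ω → E} (hF : Integrable (fun ω => F (N ω) ω) P) :
    ∫ ω, F (N ω) ω ∂P = ∑' k, ∫ ω in N ⁻¹' {k}, F k ω ∂P := by
  have hcover : ⋃ k, N ⁻¹' {k} = univ := by ext; simp
  rw [← setIntegral_univ, ← hcover, integral_iUnion (fun k => hN (measurableSet_singleton k))
    (pairwise_disjoint_fiber N) (hcover ▸ hF.integrableOn)]
  refine tsum_congr fun k => setIntegral_congr_fun (hN (measurableSet_singleton k)) ?_
  rintro ω rfl
  rfl

theorem integral_comp_randomIndex_of_indepFun [MeasurableSpace β] [NormedAddCommGroup E]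
    [NormedSpace ℝ E] [CompleteSpace E] [IsProbabilityMeasure P] {X : ℕ → Ω → β}
    (hN : Measurable N) (hX : ∀ k, Measurable (X k)) (hind : ∀ k, IndepFun N (X k) P)
    {f : β → E} (hf : StronglyMeasurable f) {C : ℝ} (hC : ∀ x, ‖f x‖ ≤ C) :
    ∫ ω, f (X (N ω) ω) ∂P = ∫ ω, ∫ ω', f (X (N ω) ω') ∂P ∂P := by
  have hmix : Integrable (fun ω => f (X (N ω) ω)) P :=
    .of_bound (hf.comp_measurable (measurable_randomIndex hN hX)).aestronglyMeasurable C
      (ae_of_all _ fun ω => hC _)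
  have hmean : Integrable (fun ω => ∫ ω', f (X (N ω) ω') ∂P) P :=
    integrable_comp_nat_of_norm_le hN fun k => by
      simpa using norm_integral_le_of_norm_le_const (μ := P) (ae_of_all _ fun ω => hC (X k ω))
  rw [integral_randomIndex_eq_tsum (F := fun k ω => f (X k ω)) hN hmix,
    integral_randomIndex_eq_tsum (F := fun k _ => ∫ ω', f (X k ω') ∂P) hN hmean]
  refine tsum_congr fun k => ?_
  rw [setIntegral_const, Indep.setIntegral_eq_smul hN.comap_le
    ((IndepFun_iff_Indep _ _ _).mp (hind k)) (hX k).aemeasurable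
    ⟨{k}, measurableSet_singleton k, rfl⟩ hf.aestronglyMeasurable]

end RandomIndex

section Coherency

variable {Ω E : Type*} [MeasurableSpace Ω] {P : Measure Ω} [IsProbabilityMeasure P]
  [NormedAddCommGroup E] [InnerProductSpace ℝ E] [MeasurableSpace E]

theorem norm_charFun_sub_charFun_le_two (μ ν : Measure E) [IsProbabilityMeasure μ]
    [IsProbabilityMeasure ν] (t : E) : ‖charFun μ t - charFun ν t‖ ≤ 2 :=
  (norm_sub_le _ _).trans <| by
    linarith [norm_charFun_le_one (μ := μ) t, norm_charFun_le_one (μ := ν) t]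

theorem norm_charFun_sub_le_biSup (μ ν : Measure E) [IsProbabilityMeasure μ]
    [IsProbabilityMeasure ν] {B : Set E} {t : E} (ht : t ∈ B) :
    ‖charFun μ t - charFun ν t‖ ≤ ⨆ s ∈ B, ‖charFun μ s - charFun ν s‖ := by
  refine le_ciSup₂ (f := fun s (_ : s ∈ B) => ‖charFun μ s - charFun ν s‖) ⟨2, ?_⟩ t ht
  simp only [mem_upperBounds, mem_iUnion, mem_range]
  rintro _ ⟨s, _, rfl⟩
  exact norm_charFun_sub_charFun_le_two μ ν s

theorem biSup_norm_charFun_sub_le_two (μ ν : Measure E) [IsProbabilityMeasure μ]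
    [IsProbabilityMeasure ν] (B : Set E) : ⨆ s ∈ B, ‖charFun μ s - charFun ν s‖ ≤ 2 :=
  Real.iSup_le (fun s => Real.iSup_le (fun _ => norm_charFun_sub_charFun_le_two μ ν s)
    zero_le_two) zero_le_two

variable [BorelSpace E]

theorem charFun_map_randomIndex {N : Ω → ℕ} {X : ℕ → Ω → E} (hN : Measurable N)
    (hX : ∀ k, Measurable (X k)) (hind : ∀ k, IndepFun N (X k) P) (t : E) :
    charFun (P.map fun ω => X (N ω) ω) t = ∫ ω, charFun (P.map (X (N ω))) t ∂P := by
  have hexp : StronglyMeasurable fun x : E => Complex.exp (⟪x, t⟫ * Complex.I) :=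
    (by fun_prop : Continuous fun x : E => Complex.exp (⟪x, t⟫ * Complex.I)).stronglyMeasurable
  simp only [charFun_apply]
  rw [integral_map (measurable_randomIndex hN hX).aemeasurable hexp.aestronglyMeasurable]
  simp only [integral_map (hX _).aemeasurable hexp.aestronglyMeasurable]
  exact integral_comp_randomIndex_of_indepFun hN hX hind hexp (C := 1) fun x => by
    rw [Complex.norm_exp_ofReal_mul_I]

theorem norm_charFun_map_randomIndex_sub_le {N : Ω → ℕ} {X : ℕ → Ω → E} (hN : Measurable N)
    (hX : ∀ k, Measurable (X k)) (hind : ∀ k, IndepFun N (X k) P) (μ : Measure E)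
    [IsProbabilityMeasure μ] (t : E) :
    ‖charFun (P.map fun ω => X (N ω) ω) t - charFun μ t‖ ≤
      ∫ ω, ‖charFun (P.map (X (N ω))) t - charFun μ t‖ ∂P := by
  have := fun k => Measure.isProbabilityMeasure_map (μ := P) (hX k).aemeasurable
  have hint : Integrable (fun ω => charFun (P.map (X (N ω))) t) P :=
    integrable_comp_nat_of_norm_le (g := fun k => charFun (P.map (X k)) t) hN
      fun k => norm_charFun_le_one t
  calc ‖charFun (P.map fun ω => X (N ω) ω) t - charFun μ t‖
      = ‖∫ ω, (charFun (P.map (X (N ω))) t - charFun μ t) ∂P‖ := by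
        rw [charFun_map_randomIndex hN hX hind, integral_sub hint (integrable_const _),
          integral_const, probReal_univ, one_smul]
    _ ≤ ∫ ω, ‖charFun (P.map (X (N ω))) t - charFun μ t‖ ∂P := norm_integral_le_integral_norm _

theorem tendsto_charFun_map_randomIndex_of_coherency {N : ℕ → Ω → ℕ} {X : ℕ → ℕ → Ω → E}
    (hN : ∀ n, Measurable (N n)) (hX : ∀ n k, Measurable (X n k))
    (hind : ∀ n k, IndepFun (N n) (X n k) P) {μ : Measure E} [IsProbabilityMeasure μ]
    (hcoh : ∀ T : ℝ, 0 < T → Tendsto (fun n => ∫ ω, ⨆ t ∈ Metric.closedBall (0 : E) T,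
      ‖charFun (P.map (X n (N n ω))) t - charFun μ t‖ ∂P) atTop (𝓝 0)) (t : E) :
    Tendsto (fun n => charFun (P.map fun ω => X n (N n ω) ω) t) atTop (𝓝 (charFun μ t)) := by
  have := fun n k => Measure.isProbabilityMeasure_map (μ := P) (hX n k).aemeasurable
  let B := Metric.closedBall (0 : E) (‖t‖ + 1)
  have ht : t ∈ B := by simp [B]
  rw [tendsto_iff_norm_sub_tendsto_zero]
  refine squeeze_zero (fun n => norm_nonneg _) (fun n => ?_) (hcoh (‖t‖ + 1) (by positivity))
  refine (norm_charFun_map_randomIndex_sub_le (hN n) (hX n) (hind n) μ t).trans <| integral_mono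
    (integrable_comp_nat_of_norm_le (g := fun k => ‖charFun (P.map (X n k)) t - charFun μ t‖)
      (hN n) (C := 2) fun k => ?_)
    (integrable_comp_nat_of_norm_le
      (g := fun k => ⨆ s ∈ B, ‖charFun (P.map (X n k)) s - charFun μ s‖) (hN n) (C := 2)
      fun k => ?_)
    fun ω => norm_charFun_sub_le_biSup _ _ ht
  · rw [norm_norm]
    exact norm_charFun_sub_charFun_le_two _ _ t
  · rw [Real.norm_of_nonneg ((norm_nonneg _).trans (norm_charFun_sub_le_biSup _ _ ht))]
    exact biSup_norm_charFun_sub_le_two _ _ _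

end Coherency

theorem tightness_of_V_and_W_general
    {Ω : Type*} [MeasurableSpace Ω] (P : Measure Ω) [IsProbabilityMeasure P]
    (m : ℕ)
    (S : ℕ → ℕ → Ω → EuclideanSpace ℝ (Fin m))
    (hSmeas : ∀ n k, Measurable (S n k))
    (a : ℕ → ℕ → EuclideanSpace ℝ (Fin m)) (b : ℕ → ℕ → ℝ) (hb : ∀ n k, 0 < b n k)
    (N : ℕ → Ω → ℕ) (hNmeas : ∀ n, Measurable (N n))
    (hNindep : ∀ n k, IndepFun (N n) (S n k) P)
    (c : ℕ → EuclideanSpace ℝ (Fin m)) (d : ℕ → ℝ)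
    (Y : ℕ → ℕ → Ω → EuclideanSpace ℝ (Fin m))
    (hY : ∀ n k ω, Y n k ω = (b n k)⁻¹ • (S n k ω - a n k))
    (Z : ℕ → Ω → EuclideanSpace ℝ (Fin m))
    (hZ : ∀ n ω, Z n ω = (d n)⁻¹ • (S n (N n ω) ω - c n))
    (U : ℕ → Ω → ℝ) (hU : ∀ n ω, U n ω = (d n)⁻¹ * b n (N n ω))
    (V : ℕ → Ω → EuclideanSpace ℝ (Fin m))
    (hV : ∀ n ω, V n ω = (d n)⁻¹ • (a n (N n ω) - c n))
    (Ylim : Ω → EuclideanSpace ℝ (Fin m)) (hYlim : Measurable Ylim)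
    (h : EuclideanSpace ℝ (Fin m) → ℂ) (hh : ∀ t, h t = charFn P Ylim t)
    -- tightness (weak relative compactness) of the family {U_n}
    (htight : Tendsto (fun R : ℝ => ⨆ n, P {ω | R < |U n ω|}) atTop (𝓝 0))
    -- coherency condition
    (hcoh : ∀ T : ℝ, 0 < T →
      Tendsto (fun n => ∫ ω,
          ⨆ t ∈ Metric.closedBall (0 : EuclideanSpace ℝ (Fin m)) T,
            ‖charFn P (Y n (N n ω)) t - h t‖ ∂P)
        atTop (𝓝 0))
    -- Z_n converges in distribution to some random vector Z
    (Zlim : Ω → EuclideanSpace ℝ (Fin m)) (hZlim : Measurable Zlim)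
    (hZconv : ∀ f : BoundedContinuousFunction (EuclideanSpace ℝ (Fin m)) ℝ,
      Tendsto (fun n => ∫ ω, f (Z n ω) ∂P) atTop (𝓝 (∫ ω, f (Zlim ω) ∂P))) :
    -- conclusion: {V_n} is tight and hence {W_n = (U_n, V_n)} is tight
    Tendsto (fun R : ℝ => ⨆ n, P {ω | R < ‖V n ω‖}) atTop (𝓝 0) ∧
    Tendsto (fun R : ℝ => ⨆ n, P {ω | R < ‖(U n ω, V n ω)‖}) atTop (𝓝 0) := by
  have hYm n k : Measurable (Y n k) := by rw [funext (hY n k)]; fun_prop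
  have hYindep n k : IndepFun (N n) (Y n k) P := funext (hY n k) ▸
    (hNindep n k).comp measurable_id
      (by fun_prop : Measurable fun x => (b n k)⁻¹ • (x - a n k))
  have hYNm n : AEMeasurable (fun ω => Y n (N n ω) ω) P :=
    (measurable_randomIndex (hNmeas n) (hYm n)).aemeasurable
  have hZm n : AEMeasurable (Z n) P := by
    rw [funext (hZ n)]
    exact ((measurable_randomIndex (hNmeas n) (hSmeas n)).aemeasurable.sub_const _).const_smul
      (d n)⁻¹
  have hUm n : AEMeasurable (U n) P := by
    rw [funext (hU n)]
    exact ((measurable_from_nat (f := fun k => (d n)⁻¹ * b n k)).comp (hNmeas n)).aemeasurable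
  have hVm n : AEMeasurable (V n) P := by
    rw [funext (hV n)]
    exact ((measurable_from_nat (f := fun k => (d n)⁻¹ • (a n k - c n))).comp
      (hNmeas n)).aemeasurable
  have hVZ : V = fun n ω => Z n ω - U n ω • Y n (N n ω) ω := by
    ext1 n; ext1 ω
    rw [hV, hZ, hU, hY]
    exact inv_smul_sub_eq_inv_smul_sub_sub_smul_inv_smul (hb n (N n ω)).ne' ..
  have := Measure.isProbabilityMeasure_map (μ := P) hYlim.aemeasurable
  have tZ : IsTightFamily P Z := isTightFamily_of_tendsto_charFun hZm
    continuous_charFun.continuousAt <|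
      tendsto_charFun_map_of_tendsto_integral hZm hZlim.aemeasurable hZconv
  have tU : IsTightFamily P U := (isTightFamily_iff_tendsto_iSup_measure_norm_gt hUm).2 <| by
    simpa only [Real.norm_eq_abs] using htight
  have tYN : IsTightFamily P fun n ω => Y n (N n ω) ω :=
    isTightFamily_of_tendsto_charFun hYNm continuous_charFun.continuousAt <|
      tendsto_charFun_map_randomIndex_of_coherency hNmeas hYm hYindep (μ := P.map Ylim) <| by
        simpa only [charFn_eq_charFun_map (hYm _ _).aemeasurable, hh,
          charFn_eq_charFun_map hYlim.aemeasurable] using hcoh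
  have tV : IsTightFamily P V := hVZ ▸ tZ.sub_smul tU tYN hZm hUm hYNm
  exact ⟨(isTightFamily_iff_tendsto_iSup_measure_norm_gt hVm).1 tV,
    (isTightFamily_iff_tendsto_iSup_measure_norm_gt fun n => (hUm n).prodMk (hVm n)).1
      (tU.prodMk tV hUm hVm)⟩

/-- If `{Uₙ}` is tight, the coherency condition holds, and `Zₙ` converges in distribution,
then the family `{Vₙ}` is weakly relatively compact (tight), and hence so is the family
`{Wₙ = (Uₙ, Vₙ)}`. -/
theorem tightness_of_V_and_W
    {Ω : Type*} [MeasurableSpace Ω] (P : Measure Ω) [IsProbabilityMeasure P]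
    (m : ℕ)
    (S : ℕ → ℕ → Ω → EuclideanSpace ℝ (Fin m))
    (hSmeas : ∀ n k, Measurable (S n k))
    (a : ℕ → ℕ → EuclideanSpace ℝ (Fin m)) (b : ℕ → ℕ → ℝ) (hb : ∀ n k, 0 < b n k)
    (N : ℕ → Ω → ℕ) (hNmeas : ∀ n, Measurable (N n)) (hNpos : ∀ n ω, 0 < N n ω)
    (hNindep : ∀ n k, IndepFun (N n) (S n k) P)
    (c : ℕ → EuclideanSpace ℝ (Fin m)) (d : ℕ → ℝ) (hd : ∀ n, 0 < d n)
    (Y : ℕ → ℕ → Ω → EuclideanSpace ℝ (Fin m))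
    (hY : ∀ n k ω, Y n k ω = (b n k)⁻¹ • (S n k ω - a n k))
    (Z : ℕ → Ω → EuclideanSpace ℝ (Fin m))
    (hZ : ∀ n ω, Z n ω = (d n)⁻¹ • (S n (N n ω) ω - c n))
    (U : ℕ → Ω → ℝ) (hU : ∀ n ω, U n ω = (d n)⁻¹ * b n (N n ω))
    (V : ℕ → Ω → EuclideanSpace ℝ (Fin m))
    (hV : ∀ n ω, V n ω = (d n)⁻¹ • (a n (N n ω) - c n))
    (Ylim : Ω → EuclideanSpace ℝ (Fin m)) (hYlim : Measurable Ylim)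
    (h : EuclideanSpace ℝ (Fin m) → ℂ) (hh : ∀ t, h t = charFn P Ylim t)
    -- tightness (weak relative compactness) of the family {U_n}
    (htight : Tendsto (fun R : ℝ => ⨆ n, P {ω | R < |U n ω|}) atTop (𝓝 0))
    -- coherency condition
    (hcoh : ∀ T : ℝ, 0 < T →
      Tendsto (fun n => ∫ ω,
          ⨆ t ∈ Metric.closedBall (0 : EuclideanSpace ℝ (Fin m)) T,
            ‖charFn P (Y n (N n ω)) t - h t‖ ∂P)
        atTop (𝓝 0))
    -- Z_n converges in distribution to some random vector Z
    (Zlim : Ω → EuclideanSpace ℝ (Fin m)) (hZlim : Measurable Zlim)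
    (hZconv : ∀ f : BoundedContinuousFunction (EuclideanSpace ℝ (Fin m)) ℝ,
      Tendsto (fun n => ∫ ω, f (Z n ω) ∂P) atTop (𝓝 (∫ ω, f (Zlim ω) ∂P))) :
    -- conclusion: {V_n} is tight and hence {W_n = (U_n, V_n)} is tight
    Tendsto (fun R : ℝ => ⨆ n, P {ω | R < ‖V n ω‖}) atTop (𝓝 0) ∧
    Tendsto (fun R : ℝ => ⨆ n, P {ω | R < ‖(U n ω, V n ω)‖}) atTop (𝓝 0) :=
  tightness_of_V_and_W_general P m S hSmeas a b hb N hNmeas hNindep c d Y hY Z hZ U hU V hV Ylim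
    hYlim h hh htight hcoh Zlim hZlim hZconv
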